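/- arXiv:2306.15446 — 2 statements merged into one kernel-verified Lean document; each statement's English description precedes it below -/
import Mathlib

section
/- (Theorem A.1, rigidity of measurable a.e. isometries) Let Ω ⊂ ℝ^d be a bounded domain (connected open set). Suppose v : Ω → ℝ^d is Lebesgue measurable and satisfies |v(x) − v(y)| = |x − y| for 2d-dimensional-Lebesgue-almost every pair (x,y) ∈ Ω × Ω. Then there exist a constant matrix F ∈ O(d) and a vector b ∈ ℝ^d such that v(x) = Fx + b for almost every x ∈ Ω. -/
open MeasureTheory Filter Topology Metric Set
open scoped ENNReal

noncomputable section

/-- ℝ^d with the Euclidean norm. -/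
abbrev Vec (d : ℕ) := EuclideanSpace ℝ (Fin d)

/-!
Since a.e. point is isometrically related to a.e. other point and proper affine subspaces are
null, one can pick an affine basis `P₀, …, P_d` of pairwise isometrically related points each of
which is related to a.e. point. The linear map `L` with `L (Pᵢ - P₀) = v Pᵢ - v P₀` preserves,
by polarization, the Gram matrix of the basis `Pᵢ - P₀`, so it is a linear isometry. For a.e. `x`,
polarization again shows that `v x - v P₀ - L (x - P₀)` is orthogonal to the range of `L`, while
`‖v x - v P₀‖ = ‖x - P₀‖ = ‖L (x - P₀)‖`; by Pythagoras `v x - v P₀ = L (x - P₀)`.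
-/

open Module
open scoped RealInnerProductSpace Matrix

theorem AffineIndependent.snoc {k V P : Type*} [DivisionRing k] [AddCommGroup V] [Module k V]
    [AddTorsor V P] {n : ℕ} {p : Fin n → P} (hp : AffineIndependent k p) {x : P}
    (hx : x ∉ affineSpan k (range p)) : AffineIndependent k (Fin.snoc p x : Fin (n + 1) → P) := by
  refine .affineIndependent_of_notMem_span (i := Fin.last n) ?_ ?_
  · rw [← affineIndependent_equiv (finSuccAboveEquiv (Fin.last n))]
    convert hp using 1
    ext i
    simp [finSuccAboveEquiv_apply]
  · convert hx using 3
    · ext y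
      simp [Fin.exists_fin_succ', Fin.castSucc_ne_last]
    · simp

section
variable {E F : Type*} [NormedAddCommGroup E] [InnerProductSpace ℝ E]
  [NormedAddCommGroup F] [InnerProductSpace ℝ F]

theorem inner_sub_sub_eq_of_norm_sub_eq {v : E → F} {x y o : E}
    (hxo : ‖v x - v o‖ = ‖x - o‖) (hyo : ‖v y - v o‖ = ‖y - o‖)
    (hxy : ‖v x - v y‖ = ‖x - y‖) :
    ⟪v x - v o, v y - v o⟫ = ⟪x - o, y - o⟫ := by
  have h₁ := norm_sub_sq_real (v x - v o) (v y - v o)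
  have h₂ := norm_sub_sq_real (x - o) (y - o)
  rw [sub_sub_sub_cancel_right] at h₁ h₂
  rw [hxo, hyo, hxy] at h₁
  linarith

theorem AffineBasis.exists_linearIsometry_of_norm_sub_eq {ι : Type*} (P : AffineBasis ι ℝ E)
    {v : E → F} (hP : ∀ i j, ‖v (P i) - v (P j)‖ = ‖P i - P j‖) :
    ∃ (L : E →ₗᵢ[ℝ] F) (c : F),
      ∀ x, (∀ i, ‖v (P i) - v x‖ = ‖P i - x‖) → v x = L x + c := by
  obtain ⟨i₀⟩ := P.nonempty
  set B := P.basisOf i₀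
  set L := B.constr ℝ fun j => v (P j) - v (P i₀)
  have hLB : ∀ j, L (B j) = v (P j) - v (P i₀) := B.constr_basis ℝ _
  have hL : ∀ y z, ⟪L y, L z⟫ = ⟪y, z⟫ := by
    suffices (innerₗ F).compl₁₂ L L = innerₗ E from fun y z => LinearMap.congr_fun₂ this y z
    refine B.ext fun j => B.ext fun k => ?_
    rw [LinearMap.compl₁₂_apply, innerₗ_apply_apply, innerₗ_apply_apply, hLB, hLB,
      P.basisOf_apply, P.basisOf_apply, vsub_eq_sub, vsub_eq_sub]
    exact inner_sub_sub_eq_of_norm_sub_eq (hP _ _) (hP _ _) (hP _ _)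
  have hLnorm : ∀ y, ‖L y‖ = ‖y‖ := (L.isometryOfInner hL).norm_map
  refine ⟨L.isometryOfInner hL, v (P i₀) - L (P i₀), fun x hx => ?_⟩
  have hx' : ∀ i, ‖v x - v (P i)‖ = ‖x - P i‖ := fun i => by
    rw [norm_sub_rev, hx i, norm_sub_rev]
  set u := v x - v (P i₀)
  set y := x - P i₀
  have horth : ⟪u - L y, L y⟫ = 0 := by
    suffices (innerₛₗ ℝ (u - L y)).comp L = 0 from LinearMap.congr_fun this y
    refine B.ext fun j => ?_
    rw [LinearMap.comp_apply, innerₛₗ_apply_apply, inner_sub_left, hL, hLB,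
      inner_sub_sub_eq_of_norm_sub_eq (hx' i₀) (hP _ _) (hx' j), P.basisOf_apply, vsub_eq_sub,
      sub_self, LinearMap.zero_apply]
  have hnorm : ‖u - L y‖ = 0 := by
    have h := norm_add_sq_eq_norm_sq_add_norm_sq_real horth
    rw [sub_add_cancel, hLnorm, show ‖u‖ = ‖y‖ from hx' i₀] at h
    nlinarith [norm_nonneg (u - L y)]
  rw [norm_eq_zero, sub_eq_zero, map_sub] at hnorm
  rw [LinearMap.coe_isometryOfInner]
  linear_combination (norm := module) hnorm

end

theorem exists_affineBasis_rel_of_ae_ae_rel {E : Type*} [NormedAddCommGroup E]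
    [NormedSpace ℝ E] [FiniteDimensional ℝ E] [MeasurableSpace E] [BorelSpace E]
    {μ ν : Measure E} [ν.IsAddHaarMeasure] (hμν : μ ≪ ν) (hμ : μ ≠ 0) {R : E → E → Prop}
    (hrefl : ∀ x, R x x) (hsymm : ∀ x y, R x y → R y x) (hR : ∀ᵐ x ∂μ, ∀ᵐ y ∂μ, R x y) :
    ∃ P : AffineBasis (Fin (finrank ℝ E + 1)) ℝ E,
      (∀ i j, R (P i) (P j)) ∧ ∀ i, ∀ᵐ y ∂μ, R (P i) y := by
  have : (ae μ).NeBot := ae_neBot.2 hμ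
  have key : ∀ n ≤ finrank ℝ E, ∃ p : Fin (n + 1) → E,
      AffineIndependent ℝ p ∧ (∀ i j, R (p i) (p j)) ∧ ∀ i, ∀ᵐ y ∂μ, R (p i) y := by
    intro n hn
    induction n with
    | zero =>
      obtain ⟨x, hx⟩ := hR.exists
      exact ⟨fun _ => x, affineIndependent_of_subsingleton ℝ (ι := Fin 1) _, fun _ _ => hrefl x,
        fun _ => hx⟩
    | succ n ih =>
      obtain ⟨p, hind, hpp, hgood⟩ := ih (by omega)
      have hnull : μ (affineSpan ℝ (range p)) = 0 := by
        refine hμν (Measure.addHaar_affineSubspace ν _ fun htop => ?_)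
        rw [hind.affineSpan_eq_top_iff_card_eq_finrank_add_one, Fintype.card_fin] at htop
        omega
      obtain ⟨x, hx, hpx, hxs⟩ := (hR.and ((ae_all_iff.2 hgood).and
        (measure_eq_zero_iff_ae_notMem.1 hnull))).exists
      refine ⟨Fin.snoc p x, hind.snoc hxs, fun i j => ?_, fun i => ?_⟩
      · induction i using Fin.lastCases <;> induction j using Fin.lastCases <;>
          simp [hrefl x, hpx, hsymm _ _ (hpx _), hpp]
      · induction i using Fin.lastCases <;> simp [hx, hgood]
  obtain ⟨p, hind, hpp, hgood⟩ := key _ le_rfl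
  exact ⟨⟨p, hind, hind.affineSpan_eq_top_iff_card_eq_finrank_add_one.2 (Fintype.card_fin _)⟩,
    hpp, hgood⟩

theorem exists_linearIsometry_ae_eq_of_ae_norm_sub_eq {E : Type*} [NormedAddCommGroup E]
    [InnerProductSpace ℝ E] [FiniteDimensional ℝ E] [MeasurableSpace E] [BorelSpace E]
    {μ ν : Measure E} [ν.IsAddHaarMeasure] [SFinite μ] (hμν : μ ≪ ν) {v : E → E}
    (hv : ∀ᵐ z ∂μ.prod μ, ‖v z.1 - v z.2‖ = ‖z.1 - z.2‖) :
    ∃ (L : E →ₗᵢ[ℝ] E) (c : E), ∀ᵐ x ∂μ, v x = L x + c := by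
  rcases eq_or_ne μ 0 with rfl | hμ
  · exact ⟨LinearIsometry.id, 0, by simp⟩
  obtain ⟨P, hPP, hgood⟩ := exists_affineBasis_rel_of_ae_ae_rel hμν hμ
    (R := fun x y => ‖v x - v y‖ = ‖x - y‖) (fun _ => by simp)
    (fun x y h => by rwa [norm_sub_rev, norm_sub_rev y]) (Measure.ae_ae_of_ae_prod hv)
  obtain ⟨L, c, hL⟩ := P.exists_linearIsometry_of_norm_sub_eq hPP
  exact ⟨L, c, (ae_all_iff.2 hgood).mono hL⟩

theorem LinearIsometry.transpose_mul_self_toEuclideanLin_symm {n : Type*} [Fintype n]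
    [DecidableEq n] (L : EuclideanSpace ℝ n →ₗᵢ[ℝ] EuclideanSpace ℝ n) :
    (Matrix.toEuclideanLin.symm L.toLinearMap)ᵀ * Matrix.toEuclideanLin.symm L.toLinearMap =
      1 := by
  apply Matrix.toEuclideanLin.injective
  rw [Matrix.toLpLin_mul, ← Matrix.conjTranspose_eq_transpose_of_trivial,
    Matrix.toEuclideanLin_conjTranspose_eq_adjoint, LinearEquiv.apply_symm_apply,
    L.adjoint_comp_self', Matrix.toLpLin_one]

theorem rigidity_of_measurable_ae_isometries_general
    {d : ℕ} (Ω : Set (Vec d))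
    (v : Vec d → Vec d)
    (hiso : ∀ᵐ z : Vec d × Vec d ∂((volume.restrict Ω).prod (volume.restrict Ω)),
      ‖v z.1 - v z.2‖ = ‖z.1 - z.2‖) :
    ∃ F : Matrix (Fin d) (Fin d) ℝ, F.transpose * F = 1 ∧
      ∃ b : Vec d, ∀ᵐ x ∂(volume.restrict Ω), v x = Matrix.toEuclideanLin F x + b := by
  obtain ⟨L, b, hL⟩ :=
    exists_linearIsometry_ae_eq_of_ae_norm_sub_eq Measure.restrict_le_self.absolutelyContinuous hiso
  refine ⟨Matrix.toEuclideanLin.symm L.toLinearMap, L.transpose_mul_self_toEuclideanLin_symm,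
    b, ?_⟩
  simpa using hL

/-- **Theorem A.1** (rigidity of measurable a.e. isometries). If a measurable map
`v : Ω → ℝ^d` on a bounded domain satisfies `|v(x)-v(y)| = |x-y|` for a.e.
`(x,y) ∈ Ω × Ω`, then `v(x) = Fx + b` a.e. on `Ω` for some `F ∈ O(d)` and `b ∈ ℝ^d`. -/
theorem rigidity_of_measurable_ae_isometries
    {d : ℕ} (Ω : Set (Vec d)) (hΩopen : IsOpen Ω) (hΩconn : IsConnected Ω)
    (hΩbdd : Bornology.IsBounded Ω)
    (v : Vec d → Vec d) (hv : Measurable v)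
    (hiso : ∀ᵐ z : Vec d × Vec d ∂((volume.restrict Ω).prod (volume.restrict Ω)),
      ‖v z.1 - v z.2‖ = ‖z.1 - z.2‖) :
    ∃ F : Matrix (Fin d) (Fin d) ℝ, F.transpose * F = 1 ∧
      ∃ b : Vec d, ∀ᵐ x ∂(volume.restrict Ω), v x = Matrix.toEuclideanLin F x + b :=
  rigidity_of_measurable_ae_isometries_general Ω v hiso
end
end

section
/- (Lemma 3.5, liminf inequality for linearization) For every u ∈ L²(Ω;ℝ^d), every sequence ε_j → 0⁺, and every sequence u_j converging to u strongly in L²(Ω;ℝ^d), one has liminf_{j→∞} Ē_{ε_j}(u_j) ≥ Ē₀(u). -/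
open MeasureTheory Filter Topology Metric Set
open scoped ENNReal

noncomputable section

/-- Difference quotient of the identity: `𝒟i(y,x) = (y-x)/|y-x|`. -/
def Di {d : ℕ} (y x : Vec d) : Vec d := ‖y - x‖⁻¹ • (y - x)

/-- Difference quotient `𝒟u(y,x) = (u(y)-u(x))/|y-x|`. -/
def Dq {d : ℕ} (u : Vec d → Vec d) (y x : Vec d) : Vec d := ‖y - x‖⁻¹ • (u y - u x)

/-- The nonlinear double integral `∫_Ω∫_Ω w(y-x, |𝒟i(y,x) + ε𝒟u(y,x)| - 1) dy dx`. -/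
def wIntegral {d : ℕ} (w : Vec d → ℝ → ℝ) (ε : ℝ) (u : Vec d → Vec d)
    (Ω : Set (Vec d)) : ℝ≥0∞ :=
  ∫⁻ x in Ω, ∫⁻ y in Ω, ENNReal.ofReal (w (y - x) (‖Di y x + ε • Dq u y x‖ - 1))

/-- The load term `∫_Ω l·u dx`. -/
def loadTerm {d : ℕ} (l u : Vec d → Vec d) (Ω : Set (Vec d)) : ℝ :=
  ∫ x in Ω, (inner ℝ (l x) (u x) : ℝ)

open Classical in
/-- The extended rescaled nonlinear energy `Ē_ε(u)`, with value `+∞` when the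
double integral is infinite. -/
def Enl {d : ℕ} (w : Vec d → ℝ → ℝ) (l : Vec d → Vec d) (Ω : Set (Vec d)) (ε : ℝ)
    (u : Vec d → Vec d) : EReal :=
  if wIntegral w ε u Ω ≠ ⊤ then
    (((ε ^ 2)⁻¹ * (wIntegral w ε u Ω).toReal - loadTerm l u Ω : ℝ) : EReal)
  else ⊤

/-- The quadratic double integral `∫_Ω∫_Ω ρ(y-x) (𝒟u(y,x)·𝒟i(y,x))² dy dx`. -/
def qIntegral {d : ℕ} (ρ : Vec d → ℝ) (u : Vec d → Vec d) (Ω : Set (Vec d)) : ℝ≥0∞ :=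
  ∫⁻ x in Ω, ∫⁻ y in Ω,
    ENNReal.ofReal (ρ (y - x) * (inner ℝ (Dq u y x) (Di y x) : ℝ) ^ 2)

/-- Membership in the energy space `X_ρ(Ω)`. -/
def MemXrho {d : ℕ} (ρ : Vec d → ℝ) (u : Vec d → Vec d) (Ω : Set (Vec d)) : Prop :=
  MemLp u 2 (volume.restrict Ω) ∧ qIntegral ρ u Ω ≠ ⊤

open Classical in
/-- The extended linearized bond-based peridynamic energy `Ē₀(u)`. -/
def Elin {d : ℕ} (ρ : Vec d → ℝ) (l : Vec d → Vec d) (Ω : Set (Vec d))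
    (u : Vec d → Vec d) : EReal :=
  if MemXrho ρ u Ω then
    (((1 / 2) * (qIntegral ρ u Ω).toReal - loadTerm l u Ω : ℝ) : EReal)
  else ⊤

/-- `Ω ⊆ ℝ^d` has Lipschitz boundary: near every boundary point, after choosing a
coordinate direction `σ`, the set is the region above the graph of a Lipschitz
function `γ` of the remaining coordinates. -/
def HasLipschitzBoundary {d : ℕ} (Ω : Set (Vec d)) : Prop :=
  ∀ x₀ ∈ frontier Ω, ∃ r : ℝ, 0 < r ∧ ∃ σ : Fin d, ∃ γ : Vec d → ℝ, ∃ L : NNReal,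
    LipschitzWith L γ ∧ (∀ x y : Vec d, (∀ i, i ≠ σ → x i = y i) → γ x = γ y) ∧
    Ω ∩ Metric.ball x₀ r = {x ∈ Metric.ball x₀ r | γ x < x σ}

/-- Conditions i)–iv) on the microelastic potential `w(ξ,s) = k(ξ)Ψ(ξ,s)`, where
`Ψ'` and `Ψ''` are the first and second partial derivatives of `Ψ` in `s` on
`[-δ₀,δ₀]`. -/
def MicroelasticAssumptions {d : ℕ} (k : Vec d → ℝ) (Ψ Ψ' Ψ'' : Vec d → ℝ → ℝ)
    (δ₀ c₁ c₂ : ℝ) : Prop :=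
  Measurable k ∧ (∀ ξ, 0 ≤ k ξ) ∧
  (∀ s : ℝ, Measurable fun ξ => Ψ ξ s) ∧
  (∀ ξ, ContinuousOn (Ψ ξ) (Ici (-1))) ∧
  (∀ ξ, ∀ s ∈ Ici (-1 : ℝ), 0 ≤ Ψ ξ s) ∧
  (∀ ξ, ∀ K : Set ℝ, IsCompact K → K ⊆ Ici (-1) →
    ∃ L : NNReal, LipschitzOnWith L (Ψ ξ) K) ∧
  0 < δ₀ ∧
  (∀ ξ, ∀ s ∈ Icc (-δ₀) δ₀, HasDerivWithinAt (Ψ ξ) (Ψ' ξ s) (Icc (-δ₀) δ₀) s) ∧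
  (∀ ξ, ∀ s ∈ Icc (-δ₀) δ₀, HasDerivWithinAt (Ψ' ξ) (Ψ'' ξ s) (Icc (-δ₀) δ₀) s) ∧
  (∀ ξ, ContinuousOn (Ψ'' ξ) (Icc (-δ₀) δ₀)) ∧
  (∀ ξ, Ψ ξ 0 = 0) ∧ (∀ ξ, Ψ' ξ 0 = 0) ∧ (∀ ξ, 0 < Ψ'' ξ 0) ∧
  (∀ s₀ : ℝ, 0 < s₀ → ∃ c : ℝ, 0 < c ∧ ∀ ξ, ∀ s : ℝ, -1 ≤ s → s₀ ≤ |s| → c ≤ Ψ ξ s) ∧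
  0 < c₁ ∧ (∀ ξ, ∀ s : ℝ, |s| < δ₀ → c₁ * (k ξ * s ^ 2) ≤ k ξ * Ψ ξ s) ∧
  0 < c₂ ∧ (∀ ξ, ∀ s : ℝ, |s| < δ₀ → k ξ * |Ψ'' ξ s| ≤ c₂ * k ξ) ∧
  LocallyIntegrable (fun ξ => k ξ * Ψ'' ξ 0) (volume : Measure (Vec d))

/-!
Fix a level `r` above the liminf and pass to a subsequence along which the energies stay below `r`
and `u_j → u` almost everywhere. For `y ≠ x` the bond direction `i = 𝒟i(y,x)` is a unit vector,
so its stretch `s_j = |i + ε_j 𝒟u_j(y,x)| - 1` satisfies `s_j / ε_j → 𝒟u(y,x)·i`. Since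
`Ψ(ξ,s) = ½ Ψ''(ξ,0) s² + o(s²)`, the rescaled bond energies `2 ε_j⁻² w(ξ, s_j)` converge pointwise
to `ρ(ξ) (𝒟u·𝒟i)²`, and Fatou's lemma on `Ω × Ω` bounds the quadratic energy by the liminf of the
nonlinear ones. The load terms converge by strong convergence in `L²`.
-/

theorem Convex.isLittleO_sub_half_mul_sq {f f' : ℝ → ℝ} {f'' : ℝ} {s : Set ℝ}
    (hs : Convex ℝ s) (h0s : (0 : ℝ) ∈ s) (hf : ∀ x ∈ s, HasDerivWithinAt f (f' x) s x)
    (hf' : HasDerivWithinAt f' f'' s 0) (h0 : f 0 = 0) (h0' : f' 0 = 0) :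
    (fun x => f x - f'' / 2 * x ^ 2) =o[𝓝[s] 0] fun x => x ^ 2 := by
  have hderiv : ∀ x ∈ s,
      HasDerivWithinAt (fun x => f x - f'' / 2 * x ^ 2) (f' x - f'' * x) s x := fun x hx =>
    ((hf x hx).sub (((hasDerivAt_pow 2 x).hasDerivWithinAt).const_mul (f'' / 2))).congr_deriv
      (by norm_num; ring)
  have hsmall : (fun x => f' x - f'' * x) =o[𝓝[s] 0] fun x => (x - 0) ^ 1 := by
    simpa only [h0', sub_zero, pow_one, smul_eq_mul, mul_comm _ f''] using
      hasDerivWithinAt_iff_isLittleO.1 hf'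
  simpa [h0] using hs.isLittleO_pow_succ_real h0s hderiv hsmall

section Bonds

variable {ι : Type*} {l : Filter ι}

theorem tendsto_div_sq_of_isLittleO {g : ℝ → ℝ} {c a : ℝ}
    (hg : (fun x => g x - c * x ^ 2) =o[𝓝 0] fun x => x ^ 2) {s ε : ι → ℝ}
    (hs : Tendsto s l (𝓝 0)) (hsε : Tendsto (fun n => s n / ε n) l (𝓝 a))
    (hε : ∀ n, ε n ≠ 0) :
    Tendsto (fun n => g (s n) / ε n ^ 2) l (𝓝 (c * a ^ 2)) := by
  -- `g(s)/ε² = c (s/ε)² + (g(s) - c s²)/ε²`, and the remainder is `o(s²) = o(ε²)`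
  have hs_sq : (fun n => s n ^ 2) =O[l] fun n => ε n ^ 2 := by
    have := ((hsε.pow 2).isBigO_one ℝ).mul (Asymptotics.isBigO_refl (fun n => ε n ^ 2) l)
    refine (this.congr_left fun n => ?_).congr_right fun n => one_mul _
    rw [div_pow, div_mul_cancel₀ _ (pow_ne_zero 2 (hε n))]
  have hrem := ((hg.comp_tendsto hs).trans_isBigO hs_sq).tendsto_div_nhds_zero
  have hlim := ((hsε.pow 2).const_mul c).add hrem
  rw [add_zero] at hlim
  refine hlim.congr fun n => ?_
  simp only [Function.comp_apply]
  field_simp [hε n]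
  ring

variable {E : Type*} [NormedAddCommGroup E] [InnerProductSpace ℝ E]

theorem tendsto_norm_add_smul_sub_one_div {ε : ι → ℝ} {D : ι → E} {i D₀ : E}
    (hi : ‖i‖ = 1) (hε : ∀ n, ε n ≠ 0) (hεlim : Tendsto ε l (𝓝 0))
    (hD : Tendsto D l (𝓝 D₀)) :
    Tendsto (fun n => (‖i + ε n • D n‖ - 1) / ε n) l (𝓝 (inner ℝ D₀ i)) := by
  -- rationalise: `‖i + εD‖² - 1 = ε (2⟪i, D⟫ + ε‖D‖²)`
  have hid : ∀ n, (‖i + ε n • D n‖ - 1) / ε n =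
      (2 * inner ℝ i (D n) + ε n * ‖D n‖ ^ 2) / (‖i + ε n • D n‖ + 1) := fun n => by
    have hsq : ‖i + ε n • D n‖ ^ 2 = 1 + ε n * (2 * inner ℝ i (D n) + ε n * ‖D n‖ ^ 2) := by
      rw [norm_add_sq_real, real_inner_smul_right, norm_smul, hi, mul_pow, Real.norm_eq_abs,
        sq_abs]
      ring
    rw [div_eq_div_iff (hε n) (by positivity)]
    linear_combination hsq
  have hnorm : Tendsto (fun n => ‖i + ε n • D n‖) l (𝓝 1) := by
    simpa [hi] using ((tendsto_const_nhds (x := i)).add (hεlim.smul hD)).norm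
  have hlim := (((tendsto_const_nhds (x := i)).inner hD).const_mul 2 |>.add
    (hεlim.mul (hD.norm.pow 2))).div (hnorm.add_const 1) (by norm_num)
  rw [real_inner_comm]
  convert hlim.congr fun n => (hid n).symm using 2
  ring

theorem tendsto_rescaled_bond_energy {g : ℝ → ℝ} {c : ℝ}
    (hg : (fun s => g s - c / 2 * s ^ 2) =o[𝓝 0] fun s => s ^ 2) {ε : ι → ℝ} {D : ι → E}
    {i D₀ : E} (hi : ‖i‖ = 1) (hε : ∀ n, ε n ≠ 0) (hεlim : Tendsto ε l (𝓝 0))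
    (hD : Tendsto D l (𝓝 D₀)) :
    Tendsto (fun n => 2 * ((ε n ^ 2)⁻¹ * g (‖i + ε n • D n‖ - 1))) l
      (𝓝 (c * inner ℝ D₀ i ^ 2)) := by
  have hs : Tendsto (fun n => ‖i + ε n • D n‖ - 1) l (𝓝 0) := by
    simpa [hi] using ((tendsto_const_nhds (x := i)).add (hεlim.smul hD)).norm.sub_const 1
  have := (tendsto_div_sq_of_isLittleO hg hs
    (tendsto_norm_add_smul_sub_one_div hi hε hεlim hD) hε).const_mul 2
  convert this using 2 with n
  · rw [div_eq_inv_mul]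
  · ring

end Bonds

theorem EReal.le_liminf_of_forall_subseq {f : ℕ → EReal} {a : EReal}
    (h : ∀ (r : ℝ) (φ : ℕ → ℕ), StrictMono φ → (∀ n, f (φ n) < r) → a ≤ r) :
    a ≤ liminf f atTop := by
  by_contra! hlt
  obtain ⟨r, hfr, hra⟩ := exists_between hlt
  lift r to ℝ using ⟨(hra.trans_le le_top).ne, (bot_le.trans_lt hfr).ne'⟩
  obtain ⟨φ, hφ, hfφ⟩ := extraction_of_frequently_atTop (frequently_lt_of_liminf_lt (h := hfr))
  exact (h r φ hφ hfφ).not_gt hra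

theorem tendsto_integral_inner_of_tendsto_eLpNorm {α E ι : Type*} [MeasurableSpace α]
    {μ : Measure α} [NormedAddCommGroup E] [InnerProductSpace ℝ E] {L : Filter ι}
    {l u : α → E} {us : ι → α → E} (hl : MemLp l 2 μ) (hu : MemLp u 2 μ)
    (hus : ∀ n, MemLp (us n) 2 μ) (h : Tendsto (fun n => eLpNorm (us n - u) 2 μ) L (𝓝 0)) :
    Tendsto (fun n => ∫ x, inner ℝ (l x) (us n x) ∂μ) L (𝓝 (∫ x, inner ℝ (l x) (u x) ∂μ)) := by
  have hL2 := (Lp.tendsto_Lp_iff_tendsto_eLpNorm'' us hus u hu).2 h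
  have hinner : ∀ {v : α → E} (hv : MemLp v 2 μ),
      inner ℝ (hl.toLp l) (hv.toLp v) = ∫ x, inner ℝ (l x) (v x) ∂μ := fun hv => by
    rw [L2.inner_def]
    refine integral_congr_ae ?_
    filter_upwards [hl.coeFn_toLp, hv.coeFn_toLp] with x hlx hvx
    rw [hlx, hvx]
  simpa only [hinner] using (tendsto_const_nhds (x := hl.toLp l)).inner (𝕜 := ℝ) hL2

section Energies

variable {d : ℕ} {Ω : Set (Vec d)} {l v : Vec d → Vec d} {w : Vec d → ℝ → ℝ} {e r : ℝ}

theorem Enl_lt_coe_iff :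
    Enl w l Ω e v < r ↔
      wIntegral w e v Ω ≠ ⊤ ∧ (e ^ 2)⁻¹ * (wIntegral w e v Ω).toReal - loadTerm l v Ω < r := by
  unfold Enl
  split_ifs with h
  · simp only [ne_eq, h, not_false_eq_true, true_and]
    exact EReal.coe_lt_coe_iff
  · simp [h]

theorem neg_loadTerm_lt_of_Enl_lt (h : Enl w l Ω e v < r) : -loadTerm l v Ω < r := by
  have hlt := (Enl_lt_coe_iff.1 h).2
  have hnonneg : 0 ≤ (e ^ 2)⁻¹ * (wIntegral w e v Ω).toReal := by positivity
  linarith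

theorem ofReal_inv_sq_mul_wIntegral_le_of_Enl_lt (h : Enl w l Ω e v < r) :
    ENNReal.ofReal (e ^ 2)⁻¹ * wIntegral w e v Ω ≤ ENNReal.ofReal (r + loadTerm l v Ω) := by
  obtain ⟨hfin, hlt⟩ := Enl_lt_coe_iff.1 h
  rw [← ENNReal.ofReal_toReal hfin, ← ENNReal.ofReal_mul (by positivity)]
  exact ENNReal.ofReal_le_ofReal (by linarith)

theorem Elin_le_of_qIntegral_le {ρ : Vec d → ℝ} {t : ℝ} (hv : MemLp v 2 (volume.restrict Ω))
    (ht : 0 ≤ t) (h : qIntegral ρ v Ω ≤ 2 * ENNReal.ofReal t) :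
    Elin ρ l Ω v ≤ ((t - loadTerm l v Ω : ℝ) : EReal) := by
  rw [← ENNReal.ofReal_ofNat, ← ENNReal.ofReal_mul zero_le_two] at h
  rw [Elin, if_pos ⟨hv, ne_top_of_le_ne_top ENNReal.ofReal_ne_top h⟩, EReal.coe_le_coe_iff]
  linarith [ENNReal.toReal_le_of_le_ofReal (by positivity) h]

end Energies

section BondDensities

variable {d : ℕ}

def wDensity (w : Vec d → ℝ → ℝ) (e : ℝ) (v : Vec d → Vec d) (z : Vec d × Vec d) : ℝ≥0∞ :=
  ENNReal.ofReal (w (z.2 - z.1) (‖Di z.2 z.1 + e • Dq v z.2 z.1‖ - 1))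

def qDensity (ρ : Vec d → ℝ) (v : Vec d → Vec d) (z : Vec d × Vec d) : ℝ≥0∞ :=
  ENNReal.ofReal (ρ (z.2 - z.1) * inner ℝ (Dq v z.2 z.1) (Di z.2 z.1) ^ 2)

theorem norm_Di {y x : Vec d} (h : y ≠ x) : ‖Di y x‖ = 1 := by
  rw [Di, norm_smul, norm_inv, norm_norm, inv_mul_cancel₀ (norm_ne_zero_iff.2 (sub_ne_zero.2 h))]

theorem measurable_Di : Measurable fun z : Vec d × Vec d => Di z.2 z.1 :=
  (continuous_snd.sub continuous_fst).norm.measurable.inv.smul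
    (continuous_snd.sub continuous_fst).measurable

variable {μ : Measure (Vec d)}

theorem aemeasurable_Dq {v : Vec d → Vec d} (hv : AEStronglyMeasurable v μ) :
    AEMeasurable (fun z : Vec d × Vec d => Dq v z.2 z.1) (μ.prod μ) :=
  (continuous_snd.sub continuous_fst).norm.measurable.inv.aemeasurable.smul
    ((hv.comp_quasiMeasurePreserving Measure.quasiMeasurePreserving_snd).aemeasurable.sub
      (hv.comp_quasiMeasurePreserving Measure.quasiMeasurePreserving_fst).aemeasurable)

theorem aemeasurable_potentialDensity {w : Vec d → ℝ → ℝ} (hwm : ∀ s, Measurable fun ξ => w ξ s)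
    (hwc : ∀ ξ, ContinuousOn (w ξ) (Ici (-1))) {v : Vec d → Vec d}
    (hv : AEStronglyMeasurable v μ) (e : ℝ) : AEMeasurable (wDensity w e v) (μ.prod μ) := by
  -- clamping at `-1` makes `w` a Carathéodory function on all of `ℝ`, hence jointly measurable
  have hclamp : Measurable (Function.uncurry fun (s : ℝ) (ξ : Vec d) => w ξ (max s (-1))) :=
    measurable_uncurry_of_continuous_of_measurable
      (fun ξ => (hwc ξ).comp_continuous (continuous_id.max continuous_const)
        fun s => le_max_right s (-1))
      fun s => hwm _
  have hstretch : AEMeasurable (fun z : Vec d × Vec d => ‖Di z.2 z.1 + e • Dq v z.2 z.1‖ - 1)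
      (μ.prod μ) :=
    ((measurable_Di.aemeasurable.add ((aemeasurable_Dq hv).const_smul e)).norm).sub_const 1
  refine ENNReal.measurable_ofReal.comp_aemeasurable
    ((hclamp.comp_aemeasurable (hstretch.prodMk
      (continuous_snd.sub continuous_fst).measurable.aemeasurable)).congr
      (.of_forall fun z => ?_))
  simp only [Function.comp_apply, Function.uncurry_apply_pair, Pi.sub_apply]
  rw [max_eq_left (by linarith [norm_nonneg (Di z.2 z.1 + e • Dq v z.2 z.1)])]

theorem aemeasurable_qDensity {ρ : Vec d → ℝ} (hρ : AEStronglyMeasurable ρ volume)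
    (hμ : μ ≪ volume) {v : Vec d → Vec d} (hv : AEStronglyMeasurable v μ) :
    AEMeasurable (qDensity ρ v) (μ.prod μ) := by
  have hsub : Measure.QuasiMeasurePreserving (fun z : Vec d × Vec d => z.2 - z.1)
      (μ.prod μ) volume := by
    simpa only [neg_add_eq_sub] using
      (quasiMeasurePreserving_neg_add volume volume).mono_left (hμ.prod hμ)
  exact ENNReal.measurable_ofReal.comp_aemeasurable
    ((hρ.comp_quasiMeasurePreserving hsub).aemeasurable.mul
      (((aemeasurable_Dq hv).inner measurable_Di.aemeasurable).pow_const 2))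

end BondDensities

section Fatou

variable {d : ℕ} {Ω : Set (Vec d)} {w : Vec d → ℝ → ℝ} {ρ : Vec d → ℝ}

def BondEnergyLinearizes (w : Vec d → ℝ → ℝ) (ρ : Vec d → ℝ) (ε : ℕ → ℝ) : Prop :=
  ∀ (ξ i : Vec d), ‖i‖ = 1 → ∀ (D : ℕ → Vec d) (D₀ : Vec d), Tendsto D atTop (𝓝 D₀) →
    Tendsto (fun n => 2 * ((ε n ^ 2)⁻¹ * w ξ (‖i + ε n • D n‖ - 1))) atTop
      (𝓝 (ρ ξ * inner ℝ D₀ i ^ 2))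

theorem wIntegral_eq_lintegral_prod {e : ℝ} {v : Vec d → Vec d}
    (h : AEMeasurable (wDensity w e v) ((volume.restrict Ω).prod (volume.restrict Ω))) :
    wIntegral w e v Ω = ∫⁻ z, wDensity w e v z ∂(volume.restrict Ω).prod (volume.restrict Ω) := by
  rw [lintegral_prod _ h]
  rfl

theorem qIntegral_eq_lintegral_prod {v : Vec d → Vec d}
    (h : AEMeasurable (qDensity ρ v) ((volume.restrict Ω).prod (volume.restrict Ω))) :
    qIntegral ρ v Ω = ∫⁻ z, qDensity ρ v z ∂(volume.restrict Ω).prod (volume.restrict Ω) := by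
  rw [lintegral_prod _ h]
  rfl

theorem qDensity_le_liminf_wDensity {ε : ℕ → ℝ} (hbond : BondEnergyLinearizes w ρ ε)
    {u : Vec d → Vec d} {us : ℕ → Vec d → Vec d} {z : Vec d × Vec d}
    (h₁ : Tendsto (fun n => us n z.1) atTop (𝓝 (u z.1)))
    (h₂ : Tendsto (fun n => us n z.2) atTop (𝓝 (u z.2))) :
    qDensity ρ u z ≤
      liminf (fun n => 2 * (ENNReal.ofReal (ε n ^ 2)⁻¹ * wDensity w (ε n) (us n) z)) atTop := by
  rcases eq_or_ne z.2 z.1 with h | h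
  · simp [qDensity, h, Dq]
  refine (Tendsto.liminf_eq ?_).ge
  refine (ENNReal.tendsto_ofReal (hbond _ _ (norm_Di h) _ _ ((h₂.sub h₁).const_smul _))).congr
    fun n => ?_
  rw [wDensity, ← ENNReal.ofReal_mul (by positivity), ENNReal.ofReal_mul zero_le_two,
    ENNReal.ofReal_ofNat]
  rfl

theorem qIntegral_le_liminf_wIntegral (hwm : ∀ s, Measurable fun ξ => w ξ s)
    (hwc : ∀ ξ, ContinuousOn (w ξ) (Ici (-1))) (hρ : AEStronglyMeasurable ρ volume)
    {ε : ℕ → ℝ} (hbond : BondEnergyLinearizes w ρ ε)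
    {u : Vec d → Vec d} {us : ℕ → Vec d → Vec d}
    (hu : AEStronglyMeasurable u (volume.restrict Ω))
    (hus : ∀ n, AEStronglyMeasurable (us n) (volume.restrict Ω))
    (hae : ∀ᵐ x ∂volume.restrict Ω, Tendsto (fun n => us n x) atTop (𝓝 (u x))) :
    qIntegral ρ u Ω ≤
      liminf (fun n => 2 * (ENNReal.ofReal (ε n ^ 2)⁻¹ * wIntegral w (ε n) (us n) Ω)) atTop := by
  set μ := volume.restrict Ω
  have hw : ∀ n, AEMeasurable (wDensity w (ε n) (us n)) (μ.prod μ) := fun n =>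
    aemeasurable_potentialDensity hwm hwc (hus n) (ε n)
  calc qIntegral ρ u Ω = ∫⁻ z, qDensity ρ u z ∂μ.prod μ :=
        qIntegral_eq_lintegral_prod
          (aemeasurable_qDensity hρ (Measure.absolutelyContinuous_of_le Measure.restrict_le_self) hu)
    _ ≤ ∫⁻ z, liminf (fun n => 2 * (ENNReal.ofReal (ε n ^ 2)⁻¹ * wDensity w (ε n) (us n) z))
          atTop ∂μ.prod μ := by
        refine lintegral_mono_ae ?_
        filter_upwards [Measure.quasiMeasurePreserving_fst.ae hae,
          Measure.quasiMeasurePreserving_snd.ae hae] with z h₁ h₂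
        exact qDensity_le_liminf_wDensity hbond h₁ h₂
    _ ≤ liminf (fun n => ∫⁻ z, 2 * (ENNReal.ofReal (ε n ^ 2)⁻¹ * wDensity w (ε n) (us n) z)
          ∂μ.prod μ) atTop :=
        lintegral_liminf_le' fun n => ((hw n).const_mul _).const_mul _
    _ = liminf (fun n => 2 * (ENNReal.ofReal (ε n ^ 2)⁻¹ * wIntegral w (ε n) (us n) Ω)) atTop := by
        congr 1
        funext n
        rw [lintegral_const_mul' 2 _ ENNReal.ofNat_ne_top,
          lintegral_const_mul' _ _ ENNReal.ofReal_ne_top, wIntegral_eq_lintegral_prod (hw n)]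

end Fatou

namespace MicroelasticAssumptions

variable {d : ℕ} {k : Vec d → ℝ} {Ψ Ψ' Ψ'' : Vec d → ℝ → ℝ} {δ₀ c₁ c₂ : ℝ}

theorem measurable_potential (hw : MicroelasticAssumptions k Ψ Ψ' Ψ'' δ₀ c₁ c₂) (s : ℝ) :
    Measurable fun ξ => k ξ * Ψ ξ s :=
  hw.1.mul (hw.2.2.1 s)

theorem continuousOn_potential (hw : MicroelasticAssumptions k Ψ Ψ' Ψ'' δ₀ c₁ c₂) (ξ : Vec d) :
    ContinuousOn (fun s => k ξ * Ψ ξ s) (Ici (-1)) :=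
  continuousOn_const.mul (hw.2.2.2.1 ξ)

theorem aestronglyMeasurable_micromodulus (hw : MicroelasticAssumptions k Ψ Ψ' Ψ'' δ₀ c₁ c₂) :
    AEStronglyMeasurable (fun ξ => k ξ * Ψ'' ξ 0) volume := by
  obtain ⟨-, -, -, -, -, -, -, -, -, -, -, -, -, -, -, -, -, -, hρ⟩ := hw
  exact hρ.aestronglyMeasurable

theorem isLittleO_potential (hw : MicroelasticAssumptions k Ψ Ψ' Ψ'' δ₀ c₁ c₂) (ξ : Vec d) :
    (fun s => k ξ * Ψ ξ s - k ξ * Ψ'' ξ 0 / 2 * s ^ 2) =o[𝓝 0] fun s => s ^ 2 := by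
  obtain ⟨-, -, -, -, -, -, hδ₀, hd1, hd2, -, hΨ0, hΨ'0, -⟩ := hw
  have h0 : (0 : ℝ) ∈ Icc (-δ₀) δ₀ := ⟨by linarith, hδ₀.le⟩
  have := ((convex_Icc _ _).isLittleO_sub_half_mul_sq h0 (hd1 ξ) (hd2 ξ 0 h0) (hΨ0 ξ)
    (hΨ'0 ξ)).const_mul_left (k ξ)
  rw [nhdsWithin_eq_nhds.2 (Icc_mem_nhds (by linarith) hδ₀)] at this
  exact this.congr_left fun s => by ring

end MicroelasticAssumptions

theorem linearization_liminf_inequality_general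
    {d : ℕ} (Ω : Set (Vec d))
    (k : Vec d → ℝ) (Ψ Ψ' Ψ'' : Vec d → ℝ → ℝ) (δ₀ c₁ c₂ : ℝ)
    (hw : MicroelasticAssumptions k Ψ Ψ' Ψ'' δ₀ c₁ c₂)
    (l : Vec d → Vec d) (hl : MemLp l 2 (volume.restrict Ω))
    (u : Vec d → Vec d) (hu : MemLp u 2 (volume.restrict Ω))
    (ε : ℕ → ℝ) (hεpos : ∀ j, 0 < ε j) (hεlim : Tendsto ε atTop (𝓝 0))
    (us : ℕ → Vec d → Vec d) (hus : ∀ j, MemLp (us j) 2 (volume.restrict Ω))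
    (husconv : Tendsto (fun j => eLpNorm (us j - u) 2 (volume.restrict Ω)) atTop (𝓝 0)) :
    Elin (fun ξ => k ξ * Ψ'' ξ 0) l Ω u ≤
      Filter.liminf (fun j => Enl (fun ξ s => k ξ * Ψ ξ s) l Ω (ε j) (us j)) atTop := by
  refine EReal.le_liminf_of_forall_subseq fun r φ hφ hlt => ?_
  obtain ⟨ns, hns, hae⟩ := (tendstoInMeasure_of_tendsto_eLpNorm two_ne_zero
    (fun n => (hus (φ n)).aestronglyMeasurable) hu.aestronglyMeasurable
    (husconv.comp hφ.tendsto_atTop)).exists_seq_tendsto_ae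
  have hψ : Tendsto (φ ∘ ns) atTop atTop := (hφ.comp hns).tendsto_atTop
  have hload : Tendsto (fun n => loadTerm l (us (φ (ns n))) Ω) atTop (𝓝 (loadTerm l u Ω)) :=
    tendsto_integral_inner_of_tendsto_eLpNorm hl hu (fun n => hus _) (husconv.comp hψ)
  have hfatou := qIntegral_le_liminf_wIntegral (ε := ε ∘ φ ∘ ns) hw.measurable_potential
    hw.continuousOn_potential hw.aestronglyMeasurable_micromodulus
    (fun ξ _ hi _ _ hD => tendsto_rescaled_bond_energy (hw.isLittleO_potential ξ) hi
      (fun n => (hεpos _).ne') (hεlim.comp hψ) hD)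
    hu.aestronglyMeasurable (fun n => (hus _).aestronglyMeasurable) hae
  have hbound := (liminf_le_liminf (.of_forall fun n => mul_le_mul_right
      (ofReal_inv_sq_mul_wIntegral_le_of_Enl_lt (hlt (ns n))) 2)).trans_eq
    (ENNReal.Tendsto.const_mul (ENNReal.tendsto_ofReal (hload.const_add r))
      (.inr ENNReal.ofNat_ne_top)).liminf_eq
  have hnonneg : 0 ≤ r + loadTerm l u Ω := ge_of_tendsto' (hload.const_add r) fun n => by
    linarith [neg_loadTerm_lt_of_Enl_lt (hlt (ns n))]
  simpa only [add_sub_cancel_right] using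
    Elin_le_of_qIntegral_le (l := l) hu hnonneg (hfatou.trans hbound)

/-- **Lemma 3.5** (liminf inequality for linearization). For every `u ∈ L²(Ω;ℝ^d)`,
every sequence `ε_j → 0⁺` and every sequence `u_j → u` strongly in `L²(Ω;ℝ^d)`,
`liminf_j Ē_{ε_j}(u_j) ≥ Ē₀(u)`. -/
theorem linearization_liminf_inequality
    {d : ℕ} (Ω : Set (Vec d)) (hΩopen : IsOpen Ω) (hΩconn : IsConnected Ω)
    (hΩbdd : Bornology.IsBounded Ω)
    (k : Vec d → ℝ) (Ψ Ψ' Ψ'' : Vec d → ℝ → ℝ) (δ₀ c₁ c₂ : ℝ)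
    (hw : MicroelasticAssumptions k Ψ Ψ' Ψ'' δ₀ c₁ c₂)
    (l : Vec d → Vec d) (hl : MemLp l 2 (volume.restrict Ω))
    (u : Vec d → Vec d) (hu : MemLp u 2 (volume.restrict Ω))
    (ε : ℕ → ℝ) (hεpos : ∀ j, 0 < ε j) (hεlim : Tendsto ε atTop (𝓝 0))
    (us : ℕ → Vec d → Vec d) (hus : ∀ j, MemLp (us j) 2 (volume.restrict Ω))
    (husconv : Tendsto (fun j => eLpNorm (us j - u) 2 (volume.restrict Ω)) atTop (𝓝 0)) :
    Elin (fun ξ => k ξ * Ψ'' ξ 0) l Ω u ≤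
      Filter.liminf (fun j => Enl (fun ξ s => k ξ * Ψ ξ s) l Ω (ε j) (us j)) atTop :=
  linearization_liminf_inequality_general Ω k Ψ Ψ' Ψ'' δ₀ c₁ c₂ hw l hl u hu ε hεpos hεlim us hus
    husconv
end
end
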